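/- arXiv:2211.11384 — 7 statements merged into one kernel-verified Lean document; each statement's English description precedes it below -/
import Mathlib

section
/- Let X_1, ..., X_n be independent random variables each taking values in [0, a] for some a > 0. Let X = X_1 + ... + X_n and μ = E[X]. Then for every ε ∈ (0,1) and α ≥ 0, Pr[|X - μ| > εμ + α] ≤ 2·exp(-εα/(3a)). -/
open MeasureTheory ProbabilityTheory Real

lemma exp_mul_le_aux {a t y : ℝ} (ha : 0 < a) (hy : y ∈ Set.Icc 0 a) :
    Real.exp (t * y) ≤ 1 + (Real.exp (t * a) - 1) * (y / a) := by
  have h1 : 0 ≤ y / a := div_nonneg hy.1 ha.le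
  have h2 : y / a ≤ 1 := (div_le_one ha).2 hy.2
  have hconv := convexOn_exp.2 (Set.mem_univ (0:ℝ)) (Set.mem_univ (t * a))
    (by linarith : (0:ℝ) ≤ 1 - y / a) h1 (by ring)
  have hya : (1 - y / a) • (0:ℝ) + (y / a) • (t * a) = t * y := by
    have ha' := ha.ne'; simp only [smul_eq_mul, mul_zero, zero_add]
    rw [div_mul_eq_mul_div, div_eq_iff ha']; ring
  rw [hya] at hconv
  simp only [smul_eq_mul, Real.exp_zero, mul_one] at hconv
  nlinarith [hconv]

lemma integrable_exp_mul_aux {Ω : Type*} [MeasureSpace Ω]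
    [IsProbabilityMeasure (ℙ : Measure Ω)] {a : ℝ} {Y : Ω → ℝ}
    (hY : Measurable Y) (hb : ∀ᵐ ω ∂ℙ, Y ω ∈ Set.Icc 0 a) (t : ℝ) :
    Integrable (fun ω => Real.exp (t * Y ω)) ℙ := by
  refine Integrable.mono' (integrable_const (Real.exp (|t| * a)))
    ((hY.const_mul t).exp.aestronglyMeasurable) ?_
  filter_upwards [hb] with ω hω
  rw [Real.norm_eq_abs, abs_of_nonneg (Real.exp_pos _).le, Real.exp_le_exp]
  calc t * Y ω ≤ |t * Y ω| := le_abs_self _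
    _ = |t| * |Y ω| := abs_mul _ _
    _ ≤ |t| * a := by
        rw [abs_of_nonneg hω.1]
        exact mul_le_mul_of_nonneg_left hω.2 (abs_nonneg t)

lemma integrable_of_Icc_aux {Ω : Type*} [MeasureSpace Ω]
    [IsProbabilityMeasure (ℙ : Measure Ω)] {a : ℝ} {Y : Ω → ℝ}
    (hY : Measurable Y) (hb : ∀ᵐ ω ∂ℙ, Y ω ∈ Set.Icc 0 a) :
    Integrable Y ℙ := by
  refine Integrable.mono' (integrable_const a) hY.aestronglyMeasurable ?_
  filter_upwards [hb] with ω hω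
  rw [Real.norm_eq_abs, abs_of_nonneg hω.1]; exact hω.2

lemma mgf_le_aux {Ω : Type*} [MeasureSpace Ω]
    [IsProbabilityMeasure (ℙ : Measure Ω)] {a : ℝ} (ha : 0 < a) {Y : Ω → ℝ}
    (hY : Measurable Y) (hb : ∀ᵐ ω ∂ℙ, Y ω ∈ Set.Icc 0 a) (t : ℝ) :
    mgf Y ℙ t ≤ Real.exp ((Real.exp (t * a) - 1) / a * ∫ ω, Y ω ∂ℙ) := by
  have hint := integrable_of_Icc_aux hY hb
  have h1 : mgf Y ℙ t ≤ ∫ ω, (1 + (Real.exp (t * a) - 1) * (Y ω / a)) ∂ℙ := by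
    refine integral_mono_ae (integrable_exp_mul_aux hY hb t)
      ((integrable_const (1:ℝ)).add ((hint.div_const a).const_mul _)) ?_
    filter_upwards [hb] with ω hω
    exact exp_mul_le_aux ha hω
  have h2 : ∫ ω, (1 + (Real.exp (t * a) - 1) * (Y ω / a)) ∂ℙ
      = 1 + (Real.exp (t * a) - 1) / a * ∫ ω, Y ω ∂ℙ := by
    rw [integral_add (integrable_const 1) ((hint.div_const a).const_mul _),
      integral_const, integral_const_mul, integral_div]
    simp [mul_div_assoc, div_mul_eq_mul_div, mul_comm]
  calc mgf Y ℙ t ≤ 1 + (Real.exp (t * a) - 1) / a * ∫ ω, Y ω ∂ℙ := by rw [← h2]; exact h1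
    _ ≤ Real.exp ((Real.exp (t * a) - 1) / a * ∫ ω, Y ω ∂ℙ) := by
        linarith [Real.add_one_le_exp ((Real.exp (t * a) - 1) / a * ∫ ω, Y ω ∂ℙ)]

lemma numeric_up_aux {ε α m a : ℝ} (ha : 0 < a) (hε0 : 0 < ε) (hε1 : ε < 1)
    (hα : 0 ≤ α) (hm : 0 ≤ m) :
    -(Real.log (1 + ε) / a) * ((1 + ε) * m + α) + (Real.exp (Real.log (1 + ε) / a * a) - 1) / a * m
      ≤ -(ε * α) / (3 * a) := by
  set L := Real.log (1 + ε) with hL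
  have hea : Real.log (1 + ε) / a * a = L := by field_simp; rfl
  rw [hea, hL, Real.exp_log (by linarith : (0:ℝ) < 1 + ε)]
  rw [← hL]
  have hpos : (0:ℝ) < 1 + ε := by linarith
  have hinv : Real.log ((1 + ε)⁻¹) ≤ (1 + ε)⁻¹ - 1 :=
    Real.log_le_sub_one_of_pos (by positivity)
  rw [Real.log_inv] at hinv
  have hc : (1 + ε) * (1 + ε)⁻¹ = 1 := mul_inv_cancel₀ hpos.ne'
  have hipos : (0:ℝ) < (1 + ε)⁻¹ := by positivity
  have hLlb : 1 - (1 + ε)⁻¹ ≤ L := by linarith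
  have h1 : ε ≤ (1 + ε) * L := by nlinarith [mul_le_mul_of_nonneg_left hLlb hpos.le]
  have h2 : ε / 3 ≤ L := by nlinarith [hLlb, hc, hipos]
  have key : -(L * ((1 + ε) * m + α)) + ε * m ≤ -(ε * α) / 3 := by
    nlinarith [mul_nonneg hm (sub_nonneg.2 h1), mul_le_mul_of_nonneg_left h2 hα]
  calc -(L / a) * ((1 + ε) * m + α) + (1 + ε - 1) / a * m
      = (-(L * ((1 + ε) * m + α)) + ε * m) / a := by ring
    _ ≤ (-(ε * α) / 3) / a := by gcongr
    _ = -(ε * α) / (3 * a) := by ring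

lemma numeric_lo_aux {ε α m a : ℝ} (ha : 0 < a) (hε0 : 0 < ε) (hε1 : ε < 1)
    (hα : 0 ≤ α) (hm : 0 ≤ m) :
    -(Real.log (1 - ε) / a) * ((1 - ε) * m - α) + (Real.exp (Real.log (1 - ε) / a * a) - 1) / a * m
      ≤ -(ε * α) / (3 * a) := by
  set M := Real.log (1 - ε) with hM
  have hea : Real.log (1 - ε) / a * a = M := by field_simp; rfl
  rw [hea, hM, Real.exp_log (by linarith : (0:ℝ) < 1 - ε)]
  rw [← hM]
  have hpos : (0:ℝ) < 1 - ε := by linarith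
  have hub : M ≤ -ε := by
    have := Real.log_le_sub_one_of_pos hpos
    linarith
  have hinv : Real.log ((1 - ε)⁻¹) ≤ (1 - ε)⁻¹ - 1 :=
    Real.log_le_sub_one_of_pos (by positivity)
  rw [Real.log_inv] at hinv
  have hc : (1 - ε) * (1 - ε)⁻¹ = 1 := mul_inv_cancel₀ hpos.ne'
  have hMlb : 1 - (1 - ε)⁻¹ ≤ M := by linarith
  have h1 : -ε ≤ (1 - ε) * M := by nlinarith [mul_le_mul_of_nonneg_left hMlb hpos.le]
  have key : -(M * ((1 - ε) * m - α)) + (1 - ε - 1) * m ≤ -(ε * α) / 3 := by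
    nlinarith [mul_nonneg hm (by linarith : 0 ≤ (1 - ε) * M + ε),
      mul_le_mul_of_nonneg_left hub hα]
  calc -(M / a) * ((1 - ε) * m - α) + (1 - ε - 1) / a * m
      = (-(M * ((1 - ε) * m - α)) + (1 - ε - 1) * m) / a := by ring
    _ ≤ (-(ε * α) / 3) / a := by gcongr
    _ = -(ε * α) / (3 * a) := by ring


/-- **Additive Chernoff bound.** If `X 1, …, X n` are independent random variables
taking values in `[0, a]`, `X` is their sum and `μ` its expectation, then for every
`ε ∈ (0,1)` and `α ≥ 0`, `Pr[|X - μ| > ε μ + α] ≤ 2 exp(-ε α / (3a))`. -/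
theorem stmt_0 {Ω : Type*} [MeasureSpace Ω] [IsProbabilityMeasure (ℙ : Measure Ω)]
    (n : ℕ) (a : ℝ) (ha : 0 < a) (X : Fin n → Ω → ℝ)
    (hmeas : ∀ i, Measurable (X i))
    (hindep : iIndepFun X ℙ)
    (hbdd : ∀ i, ∀ᵐ ω ∂ℙ, X i ω ∈ Set.Icc 0 a)
    (ε α : ℝ) (hε : ε ∈ Set.Ioo (0 : ℝ) 1) (hα : 0 ≤ α) :
    (ℙ {ω | ε * (∫ ω', (∑ i, X i ω') ∂ℙ) + α
        < |(∑ i, X i ω) - ∫ ω', (∑ i, X i ω') ∂ℙ|}).toReal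
      ≤ 2 * Real.exp (-(ε * α) / (3 * a)) := by
  obtain ⟨hε0, hε1⟩ := hε
  classical
  set S : Ω → ℝ := ∑ i, X i with hSdef
  have hSapp : ∀ ω, (∑ i, X i ω) = S ω := fun ω => by simp [hSdef]
  set m : ℝ := ∫ ω', (∑ i, X i ω') ∂ℙ with hmdef
  have hint_i : ∀ i, Integrable (X i) ℙ := fun i => integrable_of_Icc_aux (hmeas i) (hbdd i)
  have hm_sum : m = ∑ i, ∫ ω, X i ω ∂ℙ := by
    rw [hmdef]; exact integral_finset_sum _ (fun i _ => hint_i i)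
  have hm0 : 0 ≤ m := by
    rw [hm_sum]
    refine Finset.sum_nonneg fun i _ => integral_nonneg_of_ae ?_
    filter_upwards [hbdd i] with ω hω using hω.1
  have hintexp : ∀ t : ℝ, Integrable (fun ω => Real.exp (t * S ω)) ℙ := fun t =>
    hindep.integrable_exp_mul_sum hmeas (fun i _ => integrable_exp_mul_aux (hmeas i) (hbdd i) t)
  have hmgf : ∀ t : ℝ, mgf S ℙ t ≤ Real.exp ((Real.exp (t * a) - 1) / a * m) := by
    intro t
    rw [hSdef, hindep.mgf_sum hmeas]
    calc ∏ i, mgf (X i) ℙ t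
        ≤ ∏ i, Real.exp ((Real.exp (t * a) - 1) / a * ∫ ω, X i ω ∂ℙ) :=
          Finset.prod_le_prod (fun i _ => mgf_nonneg)
            (fun i _ => mgf_le_aux ha (hmeas i) (hbdd i) t)
      _ = Real.exp (∑ i, (Real.exp (t * a) - 1) / a * ∫ ω, X i ω ∂ℙ) :=
          (Real.exp_sum _ _).symm
      _ = Real.exp ((Real.exp (t * a) - 1) / a * m) := by rw [hm_sum, Finset.mul_sum]
  -- upper tail
  have ht1 : (0:ℝ) ≤ Real.log (1 + ε) / a :=
    div_nonneg (Real.log_nonneg (by linarith)) ha.le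
  have hup : (ℙ {ω | (1 + ε) * m + α ≤ S ω}).toReal ≤ Real.exp (-(ε * α) / (3 * a)) := by
    calc (ℙ {ω | (1 + ε) * m + α ≤ S ω}).toReal
        ≤ Real.exp (-(Real.log (1 + ε) / a) * ((1 + ε) * m + α)) * mgf S ℙ (Real.log (1 + ε) / a) :=
          measure_ge_le_exp_mul_mgf _ ht1 (hintexp _)
      _ ≤ Real.exp (-(Real.log (1 + ε) / a) * ((1 + ε) * m + α))
            * Real.exp ((Real.exp (Real.log (1 + ε) / a * a) - 1) / a * m) := by
          gcongr
          exact hmgf _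
      _ = Real.exp (-(Real.log (1 + ε) / a) * ((1 + ε) * m + α)
            + (Real.exp (Real.log (1 + ε) / a * a) - 1) / a * m) := (Real.exp_add _ _).symm
      _ ≤ Real.exp (-(ε * α) / (3 * a)) :=
          Real.exp_le_exp.2 (numeric_up_aux ha hε0 hε1 hα hm0)
  -- lower tail
  have ht2 : Real.log (1 - ε) / a ≤ 0 :=
    div_nonpos_of_nonpos_of_nonneg (Real.log_nonpos (by linarith) (by linarith)) ha.le
  have hlo : (ℙ {ω | S ω ≤ (1 - ε) * m - α}).toReal ≤ Real.exp (-(ε * α) / (3 * a)) := by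
    calc (ℙ {ω | S ω ≤ (1 - ε) * m - α}).toReal
        ≤ Real.exp (-(Real.log (1 - ε) / a) * ((1 - ε) * m - α)) * mgf S ℙ (Real.log (1 - ε) / a) :=
          measure_le_le_exp_mul_mgf _ ht2 (hintexp _)
      _ ≤ Real.exp (-(Real.log (1 - ε) / a) * ((1 - ε) * m - α))
            * Real.exp ((Real.exp (Real.log (1 - ε) / a * a) - 1) / a * m) := by
          gcongr
          exact hmgf _
      _ = Real.exp (-(Real.log (1 - ε) / a) * ((1 - ε) * m - α)
            + (Real.exp (Real.log (1 - ε) / a * a) - 1) / a * m) := (Real.exp_add _ _).symm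
      _ ≤ Real.exp (-(ε * α) / (3 * a)) :=
          Real.exp_le_exp.2 (numeric_lo_aux ha hε0 hε1 hα hm0)
  -- union bound
  have hsub : {ω | ε * m + α < |(∑ i, X i ω) - m|}
      ⊆ {ω | (1 + ε) * m + α ≤ S ω} ∪ {ω | S ω ≤ (1 - ε) * m - α} := by
    intro ω hω
    simp only [Set.mem_setOf_eq, Set.mem_union] at *
    rw [hSapp ω] at hω
    rcases lt_abs.mp hω with h | h
    · left; linarith
    · right; linarith
  have hPP : ℙ {ω | ε * m + α < |(∑ i, X i ω) - m|}
      ≤ ℙ {ω | (1 + ε) * m + α ≤ S ω} + ℙ {ω | S ω ≤ (1 - ε) * m - α} :=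
    (measure_mono hsub).trans (measure_union_le _ _)
  have htr := ENNReal.toReal_mono
    (ENNReal.add_ne_top.2 ⟨measure_ne_top _ _, measure_ne_top _ _⟩) hPP
  rw [ENNReal.toReal_add (measure_ne_top _ _) (measure_ne_top _ _)] at htr
  linarith
end

section
/- Let G = (V, E) be a finite graph, φ ∈ [0,1], and let S₁ ⊆ V be a cut with |E(S₁, V∖S₁)| ≤ φ·Vol(S₁), and let S₂ ⊆ V∖S₁ be a cut in the induced graph G∖S₁ (with self-loops preserving degrees) with |E(S₂, (V∖S₁)∖S₂)| ≤ φ·Vol(S₂). If Vol(S₁ ∪ S₂) ≤ (1/2)·Vol(V), then |E(S₁ ∪ S₂, V∖(S₁∪S₂))| ≤ φ·Vol(S₁ ∪ S₂), i.e., S₁ ∪ S₂ is a φ-sparse cut in G. -/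
open Finset

/-- The number of edges of `G` between disjoint vertex sets `A` and `B`
(each crossing edge counted once, as an ordered pair in `A × B`). -/
def edgesBetween {V : Type*} [Fintype V] [DecidableEq V] (G : SimpleGraph V)
    [DecidableRel G.Adj] (A B : Finset V) : ℕ :=
  ((A ×ˢ B).filter (fun p => G.Adj p.1 p.2)).card

/-- The volume of a vertex set: the sum of the degrees (in `G`) of its vertices. -/
def vol {V : Type*} [Fintype V] (G : SimpleGraph V) [DecidableRel G.Adj]
    (S : Finset V) : ℝ :=
  ∑ v ∈ S, (G.degree v : ℝ)

section

variable {V : Type*} [Fintype V] [DecidableEq V] (G : SimpleGraph V) [DecidableRel G.Adj]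

lemma edgesBetween_union_left {A B : Finset V} (C : Finset V) (h : Disjoint A B) :
    edgesBetween G (A ∪ B) C = edgesBetween G A C + edgesBetween G B C := by
  unfold edgesBetween
  rw [union_product, filter_union, card_union_of_disjoint]
  exact disjoint_filter_filter (disjoint_product.2 (Or.inl h))

lemma edgesBetween_mono_right (A : Finset V) {B C : Finset V} (h : B ⊆ C) :
    edgesBetween G A B ≤ edgesBetween G A C :=
  card_le_card (filter_subset_filter _ (product_subset_product_right h))

lemma edgesBetween_union_compl_le {S₁ S₂ : Finset V} (hS₂ : S₂ ⊆ S₁ᶜ) :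
    edgesBetween G (S₁ ∪ S₂) (S₁ ∪ S₂)ᶜ ≤
      edgesBetween G S₁ S₁ᶜ + edgesBetween G S₂ (S₁ᶜ \ S₂) := by
  have hcompl : (S₁ ∪ S₂)ᶜ = S₁ᶜ \ S₂ := by rw [compl_union, sdiff_eq_inter_compl]
  rw [hcompl, edgesBetween_union_left G _ (disjoint_compl_right.mono_right hS₂)]
  exact Nat.add_le_add_right (edgesBetween_mono_right G S₁ sdiff_subset) _

lemma vol_union {A B : Finset V} (h : Disjoint A B) : vol G (A ∪ B) = vol G A + vol G B :=
  sum_union h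

end

theorem stmt_4_general {V : Type*} [Fintype V] [DecidableEq V] (G : SimpleGraph V)
    [DecidableRel G.Adj] (φ : ℝ)
    (S₁ S₂ : Finset V) (hS₂ : S₂ ⊆ S₁ᶜ)
    (h₁ : (edgesBetween G S₁ S₁ᶜ : ℝ) ≤ φ * vol G S₁)
    (h₂ : (edgesBetween G S₂ (S₁ᶜ \ S₂) : ℝ) ≤ φ * vol G S₂) :
    (edgesBetween G (S₁ ∪ S₂) (S₁ ∪ S₂)ᶜ : ℝ) ≤ φ * vol G (S₁ ∪ S₂) := by
  have hcut : (edgesBetween G (S₁ ∪ S₂) (S₁ ∪ S₂)ᶜ : ℝ) ≤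
      edgesBetween G S₁ S₁ᶜ + edgesBetween G S₂ (S₁ᶜ \ S₂) := by
    exact_mod_cast edgesBetween_union_compl_le G hS₂
  rw [vol_union G (disjoint_compl_right.mono_right hS₂)]
  linarith

/-- Composition of sparse cuts: if `S₁` is a `φ`-sparse cut in `G`, and `S₂ ⊆ V ∖ S₁`
is a `φ`-sparse cut in the induced graph `G ∖ S₁` (with self-loops preserving degrees,
so volumes are measured in `G`), and `Vol(S₁ ∪ S₂) ≤ Vol(V)/2`, then `S₁ ∪ S₂` is a
`φ`-sparse cut in `G`. -/
theorem stmt_4 {V : Type*} [Fintype V] [DecidableEq V] (G : SimpleGraph V)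
    [DecidableRel G.Adj] (φ : ℝ) (hφ : φ ∈ Set.Icc (0 : ℝ) 1)
    (S₁ S₂ : Finset V) (hS₂ : S₂ ⊆ S₁ᶜ)
    (h₁ : (edgesBetween G S₁ S₁ᶜ : ℝ) ≤ φ * vol G S₁)
    (h₂ : (edgesBetween G S₂ (S₁ᶜ \ S₂) : ℝ) ≤ φ * vol G S₂)
    (hvol : vol G (S₁ ∪ S₂) ≤ (1 / 2) * vol G Finset.univ) :
    (edgesBetween G (S₁ ∪ S₂) (S₁ ∪ S₂)ᶜ : ℝ) ≤ φ * vol G (S₁ ∪ S₂) :=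
  stmt_4_general G φ S₁ S₂ hS₂ h₁ h₂
end

section
/- Let G = (V, E) be an n-vertex graph. Define the degree of an edge e = {u,v} as min(deg(u), deg(v)), and for d ≥ 1 define the d-projection of a cut S ⊆ V as the set of edges crossing (S, V∖S) whose degree is at least d. Then for every integers d, α ≥ 1, the number of distinct d-projections arising from cuts S with Vol(S) ≤ α·d is at most n^α. -/
/-!
The `d`-projection of `S` only sees `S ∩ V_d`, where `V_d` is the set of vertices of degree at
least `d`, and a cut of volume at most `α * d` meets `V_d` in at most `α` vertices. So its
projection is also that of the range of some map `Fin α → V`: a map onto `S ∩ V_d` if this is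
nonempty, and otherwise the constant map at a vertex of `S` of degree below `d`. There are
`n ^ α` such maps.
-/

open Finset

/-- The `d`-projection of a cut `S`: all edges of `G` crossing `(S, V ∖ S)` whose
degree `min (deg u) (deg v)` is at least `d`. -/
def dProjection {V : Type*} [Fintype V] [DecidableEq V] (G : SimpleGraph V)
    [DecidableRel G.Adj] (d : ℕ) (S : Finset V) : Finset (Sym2 V) :=
  G.edgeFinset.filter (fun e =>
    (∃ u ∈ S, ∃ v ∈ Sᶜ, e = s(u, v)) ∧
    ∃ u v, e = s(u, v) ∧ d ≤ min (G.degree u) (G.degree v))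

theorem Finset.card_filter_le_mul_le_sum {ι : Type*} (s : Finset ι) (f : ι → ℕ) (d : ℕ) :
    #{i ∈ s | d ≤ f i} * d ≤ ∑ i ∈ s, f i :=
  calc #{i ∈ s | d ≤ f i} * d ≤ ∑ i ∈ s with d ≤ f i, f i := by
        simpa using card_nsmul_le_sum _ f d fun i hi => (mem_filter.1 hi).2
    _ ≤ ∑ i ∈ s, f i := sum_le_sum_of_subset (filter_subset _ s)

theorem Finset.exists_fin_image_univ_eq {V : Type*} [DecidableEq V] {T : Finset V} {α : ℕ}
    (hT : T.Nonempty) (hcard : #T ≤ α) : ∃ f : Fin α → V, univ.image f = T := by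
  have : Nonempty T := hT.coe_sort
  obtain ⟨e⟩ : Nonempty (T ↪ Fin α) :=
    Function.Embedding.nonempty_of_card_le (by simpa using hcard)
  refine ⟨fun i => (Function.invFun (⇑e) i : T), ?_⟩
  ext v
  simp only [mem_image, mem_univ, true_and]
  constructor
  · rintro ⟨i, rfl⟩
    exact (Function.invFun (⇑e) i).2
  · intro hv
    obtain ⟨i, hi⟩ := Function.invFun_surjective e.injective ⟨v, hv⟩
    exact ⟨i, congrArg Subtype.val hi⟩

section

variable {V : Type*} [Fintype V] [DecidableEq V] (G : SimpleGraph V) [DecidableRel G.Adj]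
  {d : ℕ}

theorem mem_dProjection {S : Finset V} {e : Sym2 V} :
    e ∈ dProjection G d S ↔
      ∃ u v, G.Adj u v ∧ e = s(u, v) ∧ u ∈ S ∧ v ∉ S ∧ d ≤ G.degree u ∧ d ≤ G.degree v := by
  simp only [dProjection, mem_filter, SimpleGraph.mem_edgeFinset, mem_compl, le_min_iff]
  constructor
  · rintro ⟨he, ⟨u, hu, v, hv, rfl⟩, w, x, hwx, hw, hx⟩
    have hdeg : d ≤ G.degree u ∧ d ≤ G.degree v := by
      rcases Sym2.eq_iff.1 hwx with ⟨rfl, rfl⟩ | ⟨rfl, rfl⟩ <;> tauto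
    exact ⟨u, v, he, rfl, hu, hv, hdeg⟩
  · rintro ⟨u, v, huv, rfl, hu, hv, hdu, hdv⟩
    exact ⟨huv, ⟨u, hu, v, hv, rfl⟩, u, v, rfl, hdu, hdv⟩

theorem dProjection_congr {S T : Finset V}
    (h : {v ∈ S | d ≤ G.degree v} = {v ∈ T | d ≤ G.degree v}) :
    dProjection G d S = dProjection G d T := by
  have hmem : ∀ v, d ≤ G.degree v → (v ∈ S ↔ v ∈ T) := fun v hv => by
    simpa [hv] using congrArg (v ∈ ·) h
  ext e
  simp only [mem_dProjection]
  refine exists₂_congr fun u v => ?_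
  constructor
  · rintro ⟨huv, he, hu, hv, hdu, hdv⟩
    exact ⟨huv, he, (hmem u hdu).1 hu, (hmem v hdv).not.1 hv, hdu, hdv⟩
  · rintro ⟨huv, he, hu, hv, hdu, hdv⟩
    exact ⟨huv, he, (hmem u hdu).2 hu, (hmem v hdv).not.2 hv, hdu, hdv⟩

theorem exists_nonempty_card_le_dProjection_eq {α : ℕ} (hd : 1 ≤ d) (hα : 1 ≤ α)
    {S : Finset V} (hS : S.Nonempty) (hvol : ∑ v ∈ S, G.degree v ≤ α * d) :
    ∃ T : Finset V, T.Nonempty ∧ #T ≤ α ∧ dProjection G d T = dProjection G d S := by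
  by_cases hhigh : ({v ∈ S | d ≤ G.degree v} : Finset V).Nonempty
  · refine ⟨_, hhigh, ?_, dProjection_congr G (by simp only [filter_filter, and_self])⟩
    exact Nat.le_of_mul_le_mul_right
      ((card_filter_le_mul_le_sum S _ d).trans hvol) hd
  · obtain ⟨s, hs⟩ := hS
    have hlow : ¬ d ≤ G.degree s := fun h => hhigh ⟨s, mem_filter.2 ⟨hs, h⟩⟩
    refine ⟨{s}, singleton_nonempty s, by simpa using hα, dProjection_congr G ?_⟩
    rw [not_nonempty_iff_eq_empty.1 hhigh, filter_singleton, if_neg hlow]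

end

/-- The number of distinct `d`-projections arising from cuts `S` (nonempty proper
vertex sets) of volume at most `α · d` is at most `n ^ α`. -/
theorem stmt_5 {V : Type*} [Fintype V] [DecidableEq V] (G : SimpleGraph V)
    [DecidableRel G.Adj] (d α : ℕ) (hd : 1 ≤ d) (hα : 1 ≤ α) :
    (((Finset.univ : Finset (Finset V)).filter
        (fun S => S.Nonempty ∧ S ≠ Finset.univ ∧ ∑ v ∈ S, G.degree v ≤ α * d)).image
      (fun S => dProjection G d S)).card ≤ Fintype.card V ^ α := by
  have hsub : (((Finset.univ : Finset (Finset V)).filter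
        (fun S => S.Nonempty ∧ S ≠ Finset.univ ∧ ∑ v ∈ S, G.degree v ≤ α * d)).image
      (fun S => dProjection G d S)) ⊆
      univ.image fun f : Fin α → V => dProjection G d (univ.image f) := by
    intro P hP
    obtain ⟨S, hS, rfl⟩ := mem_image.1 hP
    obtain ⟨-, hSne, -, hvol⟩ := mem_filter.1 hS
    obtain ⟨T, hTne, hTcard, hTS⟩ :=
      exists_nonempty_card_le_dProjection_eq G hd hα hSne hvol
    obtain ⟨f, hf⟩ := exists_fin_image_univ_eq hTne hTcard
    exact mem_image.2 ⟨f, mem_univ f, by rw [hf, hTS]⟩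
  calc _ ≤ _ := card_le_card hsub
    _ ≤ #(univ : Finset (Fin α → V)) := card_image_le
    _ = Fintype.card V ^ α := by simp
end

section
/- Let G = (V, E) be an n-vertex d-regular graph with d = ⌊1/(2ε)⌋ for some ε ∈ (1/n, 1/4), and let δ ∈ (1/n, 1/4). Suppose D is a distribution over weighted subgraphs H of G such that for every partition C of V, with probability at least 1/2, for all clusters C ∈ C the induced subgraph H{C} (with self-loops) is a (δ, ε)-cut sparsifier of G{C}. Then the expected number of edges of a sample H from D is at least |E|/2 = dn/4 = Ω(n/ε). -/
open Finset MeasureTheory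

/-- The volume of a vertex set: the sum of the degrees (in `G`) of its vertices. -/
noncomputable def volG {V : Type*} [Fintype V] (G : SimpleGraph V) [DecidableRel G.Adj]
    (S : Finset V) : ℝ :=
  ∑ v ∈ S, (G.degree v : ℝ)

/-- Number of edges of `G` inside the cluster `C` crossing the cut `(S, C ∖ S)`
(self-loops of the induced graph `G{C}` never cross a cut). -/
def cutG {V : Type*} [Fintype V] [DecidableEq V] (G : SimpleGraph V)
    [DecidableRel G.Adj] (C S : Finset V) : ℕ :=
  ((S ×ˢ (C \ S)).filter (fun p => G.Adj p.1 p.2)).card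

/-- Weight, in the weighted graph with edge weights `w`, of the cut `(S, C ∖ S)`
inside the cluster `C`. -/
noncomputable def cutW {V : Type*} [Fintype V] [DecidableEq V]
    (w : Sym2 V → ℝ) (C S : Finset V) : ℝ :=
  ∑ p ∈ S ×ˢ (C \ S), w s(p.1, p.2)

/-- Lower bound for power cut sparsifiers: let `G` be an `n`-vertex `d`-regular graph
with `d = ⌊1/(2ε)⌋`, `ε, δ ∈ (1/n, 1/4)`, and let `μ` be a distribution over weighted
subgraphs of `G` (given by nonnegative weight functions supported on edges of `G`)
such that for every partition `𝒞` of `V`, with probability at least `1/2`, for every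
cluster `C ∈ 𝒞`, the induced weighted graph is a `(δ, ε)`-cut sparsifier of `G{C}`.
Then the expected number of edges of a sample is at least `|E|/2 = dn/4`. -/
theorem stmt_6 {V : Type*} [Fintype V] [DecidableEq V] (G : SimpleGraph V)
    [DecidableRel G.Adj]
    (n : ℕ) (hn : n = Fintype.card V) (ε δ : ℝ)
    (hε : ε ∈ Set.Ioo (1 / (n : ℝ)) (1 / 4)) (hδ : δ ∈ Set.Ioo (1 / (n : ℝ)) (1 / 4))
    (d : ℕ) (hd : d = ⌊1 / (2 * ε)⌋₊) (hreg : ∀ v, G.degree v = d)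
    (μ : Measure (Sym2 V → ℝ)) [IsProbabilityMeasure μ]
    (hsubgraph : ∀ᵐ w ∂μ, ∀ e, e ∉ G.edgeSet → w e = 0)
    (hnonneg : ∀ᵐ w ∂μ, ∀ e, 0 ≤ w e)
    (hsparse : ∀ 𝒞 : Finset (Finset V), (∀ v : V, ∃! C, C ∈ 𝒞 ∧ v ∈ C) →
      (1 : ℝ) / 2 ≤ (μ {w | ∀ C ∈ 𝒞, ∀ S ⊆ C,
          (1 - δ) * (cutG G C S : ℝ) - ε * volG G S ≤ cutW w C S ∧
          cutW w C S ≤ (1 + δ) * (cutG G C S : ℝ) + ε * volG G S}).toReal) :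
    (G.edgeFinset.card : ℝ) / 2
        ≤ ∫ w, ((G.edgeFinset.filter (fun e => w e ≠ 0)).card : ℝ) ∂μ ∧
      (G.edgeFinset.card : ℝ) / 2 = (d : ℝ) * n / 4 := by
  have hεpos : 0 < ε := lt_of_le_of_lt (by positivity) hε.1
  have hεd : ε * d ≤ 1 / 2 := by
    have hfl : (d : ℝ) ≤ 1 / (2 * ε) := by
      rw [hd]; exact Nat.floor_le (by positivity)
    calc ε * d ≤ ε * (1 / (2 * ε)) := by nlinarith
      _ = 1 / 2 := by field_simp
  have hms : ∀ e : Sym2 V, MeasurableSet {w : Sym2 V → ℝ | w e ≠ 0} := fun e =>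
    show MeasurableSet ((fun w : Sym2 V → ℝ => w e) ⁻¹' {(0 : ℝ)}ᶜ) from
      (measurable_pi_apply e) (measurableSet_singleton (0 : ℝ)).compl
  -- per-edge bound
  have key : ∀ e ∈ G.edgeFinset, (1 : ℝ) / 2 ≤ (μ {w : Sym2 V → ℝ | w e ≠ 0}).toReal := by
    intro e he
    induction e using Sym2.ind with
    | _ u v =>
      rw [SimpleGraph.mem_edgeFinset, SimpleGraph.mem_edgeSet] at he
      have huv : u ≠ v := he.ne
      set 𝒞 : Finset (Finset V) :=
        insert {u, v} ((Finset.univ \ {u, v}).image fun x => ({x} : Finset V)) with h𝒞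
      have hpart : ∀ x : V, ∃! C, C ∈ 𝒞 ∧ x ∈ C := by
        intro x
        by_cases hx : x ∈ ({u, v} : Finset V)
        · refine ⟨{u, v}, ⟨Finset.mem_insert_self _ _, hx⟩, ?_⟩
          rintro C ⟨hC, hxC⟩
          rcases Finset.mem_insert.mp hC with rfl | hC
          · rfl
          · obtain ⟨y, hy, rfl⟩ := Finset.mem_image.mp hC
            have hxy := Finset.mem_singleton.mp hxC
            subst hxy
            exact absurd hx (Finset.mem_sdiff.mp hy).2
        · refine ⟨{x}, ⟨Finset.mem_insert_of_mem (Finset.mem_image.mpr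
            ⟨x, Finset.mem_sdiff.mpr ⟨Finset.mem_univ x, hx⟩, rfl⟩),
            Finset.mem_singleton_self x⟩, ?_⟩
          rintro C ⟨hC, hxC⟩
          rcases Finset.mem_insert.mp hC with rfl | hC
          · exact absurd hxC hx
          · obtain ⟨y, hy, rfl⟩ := Finset.mem_image.mp hC
            have hxy := Finset.mem_singleton.mp hxC
            subst hxy
            rfl
      have hs := hsparse 𝒞 hpart
      have hsub : {w : Sym2 V → ℝ | ∀ C ∈ 𝒞, ∀ S ⊆ C,
          (1 - δ) * (cutG G C S : ℝ) - ε * volG G S ≤ cutW w C S ∧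
          cutW w C S ≤ (1 + δ) * (cutG G C S : ℝ) + ε * volG G S}
          ⊆ {w : Sym2 V → ℝ | w s(u, v) ≠ 0} := by
        intro w hw
        have hC : ({u, v} : Finset V) ∈ 𝒞 := Finset.mem_insert_self _ _
        have hS : ({u} : Finset V) ⊆ ({u, v} : Finset V) := by
          intro a ha; simp at ha; simp [ha]
        have h := (hw _ hC _ hS).1
        have hset : (({u} : Finset V) ×ˢ (({u, v} : Finset V) \ {u})) = {(u, v)} := by
          ext ⟨a, b⟩
          simp only [Finset.mem_product, Finset.mem_sdiff, Finset.mem_singleton,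
            Finset.mem_insert, Prod.mk.injEq]
          constructor
          · rintro ⟨rfl, hb1 | rfl, hb2⟩
            · exact absurd hb1 hb2
            · exact ⟨rfl, rfl⟩
          · rintro ⟨rfl, rfl⟩
            exact ⟨rfl, Or.inr rfl, fun hvu => huv hvu.symm⟩
        have hcutW : cutW w {u, v} {u} = w s(u, v) := by
          rw [cutW, hset, Finset.sum_singleton]
        have hcutG : cutG G {u, v} {u} = 1 := by
          rw [cutG, hset, Finset.filter_singleton]
          simp [he]
        have hvol : volG G {u} = d := by
          rw [volG, Finset.sum_singleton, hreg]
        rw [hcutW, hcutG, hvol] at h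
        have hδ4 : δ < 1 / 4 := hδ.2
        have : (0 : ℝ) < w s(u, v) := by push_cast at h; nlinarith
        exact ne_of_gt this
      have hmono : (μ {w : Sym2 V → ℝ | ∀ C ∈ 𝒞, ∀ S ⊆ C,
          (1 - δ) * (cutG G C S : ℝ) - ε * volG G S ≤ cutW w C S ∧
          cutW w C S ≤ (1 + δ) * (cutG G C S : ℝ) + ε * volG G S}).toReal
          ≤ (μ {w : Sym2 V → ℝ | w s(u, v) ≠ 0}).toReal :=
        ENNReal.toReal_mono (measure_ne_top μ _) (measure_mono hsub)
      linarith
  constructor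
  · have hint : ∫ w, ((G.edgeFinset.filter (fun e => w e ≠ 0)).card : ℝ) ∂μ
        = ∑ e ∈ G.edgeFinset, (μ {w : Sym2 V → ℝ | w e ≠ 0}).toReal := by
      have h1 : ∀ w : Sym2 V → ℝ, ((G.edgeFinset.filter (fun e => w e ≠ 0)).card : ℝ)
          = ∑ e ∈ G.edgeFinset,
              Set.indicator {w : Sym2 V → ℝ | w e ≠ 0} (fun _ => (1 : ℝ)) w := by
        intro w
        rw [Finset.card_filter]
        push_cast
        refine Finset.sum_congr rfl fun e _ => ?_
        by_cases h : w e = 0 <;> simp [Set.indicator, h]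
      simp_rw [h1]
      rw [integral_finset_sum]
      · refine Finset.sum_congr rfl fun e _ => ?_
        exact integral_indicator_one (hms e)
      · intro e _
        exact (integrable_const (1 : ℝ)).indicator (hms e)
    rw [hint]
    calc (G.edgeFinset.card : ℝ) / 2 = ∑ _e ∈ G.edgeFinset, (1 : ℝ) / 2 := by
          rw [Finset.sum_const]; push_cast; ring
      _ ≤ ∑ e ∈ G.edgeFinset, (μ {w : Sym2 V → ℝ | w e ≠ 0}).toReal :=
          Finset.sum_le_sum key
  · have hsum := G.sum_degrees_eq_twice_card_edges
    have h2 : 2 * G.edgeFinset.card = n * d := by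
      rw [← hsum]
      simp [hreg, hn, Finset.sum_const, Finset.card_univ, mul_comm]
    have h2' : (2 : ℝ) * G.edgeFinset.card = n * d := by exact_mod_cast h2
    linarith
end

section
/- Let G be a graph, φ ∈ (0,1), δ ∈ (0, 1/16), ψ = δφ, and let G' be a (δ, ψ)-cut sparsifier of G. For any cut S with Vol_G(S) ≤ Vol_G(S̄), if Φ'(S) := w_{G'}(S,S̄)/Vol_G(S) ≤ (1+2δ)φ, then Φ_G(S) ≤ (1+5δ)φ. Conversely, if Φ_G(S) ≤ φ then Φ'(S) ≤ (1+2δ)φ. -/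
/-! The lower sparsifier bound gives `(1 - δ) w ≤ (1 + 3δ) φ v`, and `1 + 3δ ≤ (1 - δ)(1 + 5δ)`
as soon as `δ ≤ 1/5`; the upper bound gives `w' ≤ (1 + δ) φ v + δ φ v` directly. -/

section SparsifiedConductance

variable {w w' v φ δ : ℝ}

theorem div_le_of_sparsified_div_le (hφ : 0 ≤ φ) (hδ : 0 ≤ δ) (hδ' : δ ≤ 1 / 5) (hv : 0 < v)
    (hlower : (1 - δ) * w - δ * φ * v ≤ w') (h : w' / v ≤ (1 + 2 * δ) * φ) :
    w / v ≤ (1 + 5 * δ) * φ := by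
  rw [div_le_iff₀ hv] at h ⊢
  have hfactor : 1 + 3 * δ ≤ (1 - δ) * (1 + 5 * δ) := by nlinarith
  have hφv : 0 ≤ φ * v := mul_nonneg hφ hv.le
  have hscaled : (1 - δ) * w ≤ (1 - δ) * ((1 + 5 * δ) * φ * v) :=
    calc (1 - δ) * w ≤ (1 + 3 * δ) * (φ * v) := by linarith
      _ ≤ (1 - δ) * (1 + 5 * δ) * (φ * v) := mul_le_mul_of_nonneg_right hfactor hφv
      _ = (1 - δ) * ((1 + 5 * δ) * φ * v) := by ring
  linarith [le_of_mul_le_mul_left hscaled (by linarith : (0 : ℝ) < 1 - δ)]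

theorem sparsified_div_le_of_div_le (hδ : 0 ≤ 1 + δ) (hv : 0 < v)
    (hupper : w' ≤ (1 + δ) * w + δ * φ * v) (h : w / v ≤ φ) :
    w' / v ≤ (1 + 2 * δ) * φ := by
  rw [div_le_iff₀ hv] at h ⊢
  nlinarith [mul_le_mul_of_nonneg_left h hδ]

end SparsifiedConductance

/-- Let `G'` be a `(δ, ψ)`-cut sparsifier of `G` with `ψ = δφ`, `φ ∈ (0,1)`,
`δ ∈ (0, 1/16)`. For any cut `S` with `Vol_G(S) ≤ Vol_G(S̄)`, if
`Φ'(S) = w_{G'}(S,S̄)/Vol_G(S) ≤ (1+2δ)φ` then `Φ_G(S) ≤ (1+5δ)φ`; conversely, if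
`Φ_G(S) ≤ φ` then `Φ'(S) ≤ (1+2δ)φ`. -/
theorem stmt_13 {V : Type*} [Fintype V] [DecidableEq V]
    (wG wG' vol : Finset V → ℝ) (φ δ : ℝ)
    (hφ : φ ∈ Set.Ioo (0 : ℝ) 1) (hδ : δ ∈ Set.Ioo (0 : ℝ) (1 / 16))
    (hsparsifier : ∀ S : Finset V,
      (1 - δ) * wG S - (δ * φ) * vol S ≤ wG' S ∧
      wG' S ≤ (1 + δ) * wG S + (δ * φ) * vol S) :
    ∀ S : Finset V, 0 < vol S → vol S ≤ vol Sᶜ →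
      (wG' S / vol S ≤ (1 + 2 * δ) * φ → wG S / vol S ≤ (1 + 5 * δ) * φ) ∧
      (wG S / vol S ≤ φ → wG' S / vol S ≤ (1 + 2 * δ) * φ) := by
  intro S hvol _
  obtain ⟨hlower, hupper⟩ := hsparsifier S
  exact ⟨div_le_of_sparsified_div_le hφ.1.le hδ.1.le (by linarith [hδ.2]) hvol hlower,
    sparsified_div_le_of_div_le (by linarith [hδ.1]) hvol hupper⟩
end

section
/- Let G be a graph, φ ∈ (0,1), δ ∈ (0,1/16), ψ = δφ, and G' a (δ,ψ)-cut sparsifier of G such that for all cuts S, (1-2δ)Vol_G(S) ≤ Vol_{G'}(S) ≤ (1+2δ)Vol_G(S). Then for any cut S with Vol_G(S) ≤ Vol_G(S̄): Φ_{G'}(S) ≤ ((1+δ)/(1-2δ))·Φ_G(S) + ψ/(1-2δ), and Φ_{G'}(S) ≥ ((1-δ)/(1+2δ))·Φ_G(S) - ψ/(1+2δ). -/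
/-- Let `G'` be a `(δ, ψ)`-cut sparsifier of `G` with `ψ = δφ`, `φ ∈ (0,1)`,
`δ ∈ (0, 1/16)`, whose volumes satisfy `(1-2δ)Vol_G(S) ≤ Vol_{G'}(S) ≤ (1+2δ)Vol_G(S)`
for all cuts. Then for any cut `S` with `Vol_G(S) ≤ Vol_G(S̄)`, with
`Φ_H(S) = w_H(S,S̄)/min(Vol_H(S), Vol_H(S̄))`:
`Φ_{G'}(S) ≤ ((1+δ)/(1-2δ))·Φ_G(S) + ψ/(1-2δ)` and
`Φ_{G'}(S) ≥ ((1-δ)/(1+2δ))·Φ_G(S) - ψ/(1+2δ)`. -/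
theorem stmt_15 {V : Type*} [Fintype V] [DecidableEq V]
    (wG wG' volG volG' : Finset V → ℝ) (φ δ : ℝ)
    (hφ : φ ∈ Set.Ioo (0 : ℝ) 1) (hδ : δ ∈ Set.Ioo (0 : ℝ) (1 / 16))
    (hwGnn : ∀ S, 0 ≤ wG S) (hwG'nn : ∀ S, 0 ≤ wG' S) (hvolpos : ∀ S, 0 < volG S)
    (hsparsifier : ∀ S : Finset V,
      (1 - δ) * wG S - (δ * φ) * volG S ≤ wG' S ∧
      wG' S ≤ (1 + δ) * wG S + (δ * φ) * volG S)
    (hvol : ∀ S : Finset V,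
      (1 - 2 * δ) * volG S ≤ volG' S ∧ volG' S ≤ (1 + 2 * δ) * volG S) :
    ∀ S : Finset V, volG S ≤ volG Sᶜ →
      wG' S / min (volG' S) (volG' Sᶜ)
          ≤ ((1 + δ) / (1 - 2 * δ)) * (wG S / volG S) + (δ * φ) / (1 - 2 * δ) ∧
      ((1 - δ) / (1 + 2 * δ)) * (wG S / volG S) - (δ * φ) / (1 + 2 * δ)
          ≤ wG' S / min (volG' S) (volG' Sᶜ) := by
  obtain ⟨hδ0, hδ1⟩ := hδ
  intro S hS
  have h2 : (0:ℝ) < 1 - 2*δ := by linarith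
  have h3 : (0:ℝ) < 1 + 2*δ := by linarith
  have hvS := hvolpos S
  have hvSc := hvolpos Sᶜ
  have hm1 : (1-2*δ)*volG S ≤ min (volG' S) (volG' Sᶜ) := by
    apply le_min
    · exact (hvol S).1
    · calc (1-2*δ)*volG S ≤ (1-2*δ)*volG Sᶜ := by nlinarith
        _ ≤ volG' Sᶜ := (hvol Sᶜ).1
  have hmpos : 0 < min (volG' S) (volG' Sᶜ) := lt_of_lt_of_le (by positivity) hm1
  have hm2 : min (volG' S) (volG' Sᶜ) ≤ (1+2*δ)*volG S :=
    le_trans (min_le_left _ _) (hvol S).2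
  have hφnn : 0 ≤ δ * φ := by nlinarith [hφ.1]
  constructor
  · have heq : ((1 + δ) / (1 - 2 * δ)) * (wG S / volG S) + (δ * φ) / (1 - 2 * δ)
        = ((1 + δ) * wG S + (δ * φ) * volG S) / ((1 - 2 * δ) * volG S) := by
      field_simp
    rw [heq]
    apply div_le_div₀ (by nlinarith [hwGnn S]) (hsparsifier S).2 (by positivity) hm1
  · have heq : ((1 - δ) / (1 + 2 * δ)) * (wG S / volG S) - (δ * φ) / (1 + 2 * δ)
        = ((1 - δ) * wG S - (δ * φ) * volG S) / ((1 + 2 * δ) * volG S) := by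
      field_simp
    rw [heq]
    exact div_le_div₀ (hwG'nn S) (hsparsifier S).1 hmpos hm2
end

section
/- Let δ ∈ (0, 1/16) and φ ∈ (0,1). If a graph G' (a (δ, δφ)-cut sparsifier of G with volume distortion at most factor (1±2δ)) is a (1+5δ)φ-expander, then G is a φ-expander. Specifically, for every cut S with Vol_G(S) ≤ Vol_G(S̄): Φ_G(S) ≥ ((1-2δ)/(1+δ))·Φ_{G'}(S) - δφ/(1+δ), and if Φ_{G'}(S) ≥ (1+5δ)φ then Φ_G(S) ≥ ((1+2δ-10δ²)/(1+δ))·φ > φ. -/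
/-!
Write `q = Φ_{G'}(S)`. Since `Vol_G(S)` is the smaller side in `G`, the volume distortion gives
`min (Vol_{G'}(S), Vol_{G'}(S̄)) ≥ (1-2δ)·Vol_G(S)`, so
`(1-2δ)·q·Vol_G(S) ≤ w_{G'}(S,S̄) ≤ (1+δ)·w_G(S,S̄) + δφ·Vol_G(S)`; dividing by
`(1+δ)·Vol_G(S)` is the first bound. Plugging in `q ≥ (1+5δ)φ` gives the second, because
`(1-2δ)(1+5δ) - δ = 1+2δ-10δ²`, and this exceeds `1+δ` as soon as `δ < 1/10`.
-/

section OrderedField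

variable {K : Type*} [Field K] [LinearOrder K] [IsStrictOrderedRing K]

theorem mul_le_min_of_le_of_le {c a b a' b' : K} (hc : 0 ≤ c) (hab : a ≤ b)
    (ha : c * a ≤ a') (hb : c * b ≤ b') : c * a ≤ min a' b' :=
  le_min ha ((mul_le_mul_of_nonneg_left hab hc).trans hb)

/-- Transfer of a sparsity lower bound through a cut sparsifier with multiplicative upper
error `a`, additive error `ε` per unit of volume, and volumes shrunk by at most a factor `b`. -/
theorem div_sub_le_div_of_sparsifier {a b ε w w' v M : K} (ha : 0 < a) (hb : 0 < b)
    (hv : 0 < v) (hw' : 0 ≤ w') (hM : b * v ≤ M) (hup : w' ≤ a * w + ε * v) :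
    b / a * (w' / M) - ε / a ≤ w / v := by
  have hMpos : 0 < M := (mul_pos hb hv).trans_le hM
  have hq : 0 ≤ w' / M := div_nonneg hw' hMpos.le
  have key : (b * (w' / M) - ε) * v ≤ a * w := by
    have : w' / M * (b * v) ≤ w' / M * M := mul_le_mul_of_nonneg_left hM hq
    rw [div_mul_cancel₀ _ hMpos.ne'] at this
    linarith
  rw [le_div_iff₀ hv, div_mul_eq_mul_div, div_sub_div_same, div_mul_eq_mul_div,
    div_le_iff₀ ha]
  linarith

theorem div_mul_le_of_one_add_five_mul_le {δ φ q : K} (hδ : 2 * δ ≤ 1) (hδ' : 0 < 1 + δ)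
    (hq : (1 + 5 * δ) * φ ≤ q) :
    (1 + 2 * δ - 10 * δ ^ 2) / (1 + δ) * φ ≤ (1 - 2 * δ) / (1 + δ) * q - δ * φ / (1 + δ) := by
  have h := mul_le_mul_of_nonneg_left hq (sub_nonneg.mpr hδ)
  rw [div_mul_eq_mul_div, div_mul_eq_mul_div, div_sub_div_same, div_le_div_iff_of_pos_right hδ']
  linarith

theorem lt_mul_of_lt_one_div_ten {δ φ : K} (hφ : 0 < φ) (hδ : 0 < δ) (hδ' : δ < 1 / 10) :
    φ < (1 + 2 * δ - 10 * δ ^ 2) / (1 + δ) * φ := by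
  have hgap : 0 < δ * (1 - 10 * δ) := mul_pos hδ (by linarith)
  rw [div_mul_eq_mul_div, lt_div_iff₀ (by linarith)]
  nlinarith

end OrderedField

theorem stmt_16_general {V : Type*} [Fintype V] [DecidableEq V]
    (wG wG' volG volG' : Finset V → ℝ) (φ δ : ℝ)
    (hφ : φ ∈ Set.Ioo (0 : ℝ) 1) (hδ : δ ∈ Set.Ioo (0 : ℝ) (1 / 16))
    (hwG'nn : ∀ S, 0 ≤ wG' S) (hvolpos : ∀ S, 0 < volG S)
    (hsparsifier : ∀ S : Finset V,
      (1 - δ) * wG S - (δ * φ) * volG S ≤ wG' S ∧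
      wG' S ≤ (1 + δ) * wG S + (δ * φ) * volG S)
    (hvol : ∀ S : Finset V,
      (1 - 2 * δ) * volG S ≤ volG' S ∧ volG' S ≤ (1 + 2 * δ) * volG S) :
    ∀ S : Finset V, volG S ≤ volG Sᶜ →
      ((1 - 2 * δ) / (1 + δ)) * (wG' S / min (volG' S) (volG' Sᶜ)) - (δ * φ) / (1 + δ)
          ≤ wG S / volG S ∧
      ((1 + 5 * δ) * φ ≤ wG' S / min (volG' S) (volG' Sᶜ) →
        ((1 + 2 * δ - 10 * δ ^ 2) / (1 + δ)) * φ ≤ wG S / volG S ∧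
        φ < wG S / volG S) := by
  obtain ⟨hφ0, -⟩ := hφ
  obtain ⟨hδ0, hδ16⟩ := hδ
  intro S hS
  have hmin : (1 - 2 * δ) * volG S ≤ min (volG' S) (volG' Sᶜ) :=
    mul_le_min_of_le_of_le (by linarith) hS (hvol S).1 (hvol Sᶜ).1
  have hbound := div_sub_le_div_of_sparsifier (by linarith) (by linarith) (hvolpos S)
    (hwG'nn S) hmin (hsparsifier S).2
  refine ⟨hbound, fun hexp => ?_⟩
  have hφbound := (div_mul_le_of_one_add_five_mul_le (by linarith) (by linarith) hexp).trans hbound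
  exact ⟨hφbound, (lt_mul_of_lt_one_div_ten hφ0 hδ0 (by linarith)).trans_le hφbound⟩

/-- Let `δ ∈ (0, 1/16)`, `φ ∈ (0,1)`, and let `G'` be a `(δ, δφ)`-cut sparsifier of
`G` with volume distortion at most `(1 ± 2δ)`. Then for every cut `S` with
`Vol_G(S) ≤ Vol_G(S̄)` (writing `Φ_H(S) = w_H(S,S̄)/min(Vol_H(S), Vol_H(S̄))`):
`Φ_G(S) ≥ ((1-2δ)/(1+δ))·Φ_{G'}(S) - δφ/(1+δ)`, and if `Φ_{G'}(S) ≥ (1+5δ)φ` then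
`Φ_G(S) ≥ ((1+2δ-10δ²)/(1+δ))·φ > φ`; in particular, if `G'` is a
`(1+5δ)φ`-expander then `G` is a `φ`-expander. -/
theorem stmt_16 {V : Type*} [Fintype V] [DecidableEq V]
    (wG wG' volG volG' : Finset V → ℝ) (φ δ : ℝ)
    (hφ : φ ∈ Set.Ioo (0 : ℝ) 1) (hδ : δ ∈ Set.Ioo (0 : ℝ) (1 / 16))
    (hwGnn : ∀ S, 0 ≤ wG S) (hwG'nn : ∀ S, 0 ≤ wG' S) (hvolpos : ∀ S, 0 < volG S)
    (hsparsifier : ∀ S : Finset V,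
      (1 - δ) * wG S - (δ * φ) * volG S ≤ wG' S ∧
      wG' S ≤ (1 + δ) * wG S + (δ * φ) * volG S)
    (hvol : ∀ S : Finset V,
      (1 - 2 * δ) * volG S ≤ volG' S ∧ volG' S ≤ (1 + 2 * δ) * volG S) :
    ∀ S : Finset V, volG S ≤ volG Sᶜ →
      ((1 - 2 * δ) / (1 + δ)) * (wG' S / min (volG' S) (volG' Sᶜ)) - (δ * φ) / (1 + δ)
          ≤ wG S / volG S ∧
      ((1 + 5 * δ) * φ ≤ wG' S / min (volG' S) (volG' Sᶜ) →
        ((1 + 2 * δ - 10 * δ ^ 2) / (1 + δ)) * φ ≤ wG S / volG S ∧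
        φ < wG S / volG S) :=
  stmt_16_general wG wG' volG volG' φ δ hφ hδ hwG'nn hvolpos hsparsifier hvol
end
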